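/- arXiv:2506.13633 — 4 statements merged into one kernel-verified Lean document; each statement's English description precedes it below -/
import Mathlib

section
/- There exists a constant L_B, depending only on T, R_D, the bounds and Lipschitz constants of σ and σ', and the moments of μ₀, such that |B₀(t¹,x¹,t',x') − B₀(t²,x²,t',x')| ≤ L_B (|t¹−t²| + ‖x¹−x²‖) for all t¹,t²,t' ∈ [0,T] and all x¹,x²,x' ∈ D. -/
/-!
For fixed parameters the integrand `k` is built from bounded Lipschitz functions of the
preactivation `wᵗ t + ⟪w, x⟫ + η`, which is Lipschitz in `(t, x)` with constant `|wᵗ| + ‖w‖`,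
and from the factor `t t' + ⟪x, x'⟫ + 1`, Lipschitz with constant `|t'| + ‖x'‖`. As `c` is
bounded `μ₀`-a.e., the difference of integrands is at most `(A (|wᵗ| + ‖w‖) + B) (|t₁ - t₂| +
‖x₁ - x₂‖)` for constants `A`, `B`, and this weight is integrable because second moments control first moments on a
probability space. Integrating gives the Lipschitz bound with `L_B = ∫ (A (|wᵗ| + ‖w‖) + B) dμ₀`.
-/

open MeasureTheory Set

noncomputable section

/-- The neural-network (neural tangent) kernel integrand
`k(t,x,t',x'; c,wᵗ,w,η)` from the paper, with parameter tuple
`p = (c, wᵗ, w, η) ∈ ℝ × ℝ × ℝ^d × ℝ`. -/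
def nnk (d : ℕ) (σ σ' : ℝ → ℝ)
    (t : ℝ) (x : EuclideanSpace ℝ (Fin d)) (t' : ℝ) (x' : EuclideanSpace ℝ (Fin d))
    (p : ℝ × ℝ × EuclideanSpace ℝ (Fin d) × ℝ) : ℝ :=
  σ (p.2.1 * t + (inner ℝ p.2.2.1 x : ℝ) + p.2.2.2) *
      σ (p.2.1 * t' + (inner ℝ p.2.2.1 x' : ℝ) + p.2.2.2)
    + p.1 ^ 2 * σ' (p.2.1 * t + (inner ℝ p.2.2.1 x : ℝ) + p.2.2.2) *
        σ' (p.2.1 * t' + (inner ℝ p.2.2.1 x' : ℝ) + p.2.2.2) *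
        (t * t' + (inner ℝ x x' : ℝ) + 1)

/-- The neural-network kernel `B₀(t,x,t',x') = ∫ k(t,x,t',x'; ·) dμ₀`. -/
def nnB (d : ℕ) (σ σ' : ℝ → ℝ)
    (μ₀ : Measure (ℝ × ℝ × EuclideanSpace ℝ (Fin d) × ℝ))
    (t : ℝ) (x : EuclideanSpace ℝ (Fin d)) (t' : ℝ) (x' : EuclideanSpace ℝ (Fin d)) : ℝ :=
  ∫ p, nnk d σ σ' t x t' x' p ∂μ₀

open scoped NNReal

theorem abs_mul_sub_mul_le (a₁ a₂ b₁ b₂ : ℝ) :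
    |a₁ * b₁ - a₂ * b₂| ≤ |a₁ - a₂| * |b₁| + |a₂| * |b₁ - b₂| := by
  calc |a₁ * b₁ - a₂ * b₂| = |(a₁ - a₂) * b₁ + a₂ * (b₁ - b₂)| := by ring_nf
    _ ≤ |a₁ - a₂| * |b₁| + |a₂| * |b₁ - b₂| := by
      rw [← abs_mul, ← abs_mul]; exact abs_add_le _ _

theorem abs_sub_le_of_lipschitzWith {f : ℝ → ℝ} {K : ℝ≥0} (hf : LipschitzWith K f) (a b : ℝ) :
    |f a - f b| ≤ K * |a - b| := by
  simpa only [Real.dist_eq] using hf.dist_le_mul a b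

section Affine

variable {E : Type*} [NormedAddCommGroup E] [InnerProductSpace ℝ E]

theorem abs_affine_le (w t : ℝ) (v x : E) (η : ℝ) :
    |w * t + inner ℝ v x + η| ≤ |w| * |t| + ‖v‖ * ‖x‖ + |η| := by
  calc |w * t + inner ℝ v x + η| ≤ |w * t| + |inner ℝ v x| + |η| := abs_add_three _ _ _
    _ ≤ |w| * |t| + ‖v‖ * ‖x‖ + |η| := by
      rw [abs_mul]; gcongr; exact abs_real_inner_le_norm v x

theorem abs_affine_sub_affine_le (w t₁ t₂ : ℝ) (v x₁ x₂ : E) (η : ℝ) :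
    |(w * t₁ + inner ℝ v x₁ + η) - (w * t₂ + inner ℝ v x₂ + η)| ≤
      (|w| + ‖v‖) * (|t₁ - t₂| + ‖x₁ - x₂‖) := by
  have h : (w * t₁ + inner ℝ v x₁ + η) - (w * t₂ + inner ℝ v x₂ + η) =
      w * (t₁ - t₂) + inner ℝ v (x₁ - x₂) + 0 := by
    rw [inner_sub_right]; ring
  rw [h]
  refine (abs_affine_le _ _ _ _ _).trans ?_
  rw [abs_zero, add_zero]
  nlinarith [mul_nonneg (abs_nonneg w) (norm_nonneg (x₁ - x₂)),
    mul_nonneg (norm_nonneg v) (abs_nonneg (t₁ - t₂))]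

theorem abs_mul_add_inner_add_one_le {T R t t' : ℝ} {x x' : E} (ht : |t| ≤ T) (ht' : |t'| ≤ T)
    (hx : ‖x‖ ≤ R) (hx' : ‖x'‖ ≤ R) : |t * t' + inner ℝ x x' + 1| ≤ T ^ 2 + R ^ 2 + 1 := by
  have hT : 0 ≤ T := (abs_nonneg t).trans ht
  have hR : 0 ≤ R := (norm_nonneg x).trans hx
  refine (abs_affine_le t t' x x' 1).trans ?_
  rw [abs_one, sq, sq]
  gcongr

end Affine

section Integral

variable {α : Type*} [MeasurableSpace α] {μ : Measure α}

theorem integrable_of_norm_sq_le [IsFiniteMeasure μ] {F : Type*} [NormedAddCommGroup F]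
    {f : α → F} {g : α → ℝ} (hf : AEStronglyMeasurable f μ) (hg : Integrable g μ)
    (h : ∀ᵐ a ∂μ, ‖f a‖ ^ 2 ≤ g a) : Integrable f μ :=
  ((memLp_two_iff_integrable_sq_norm hf).2 (hg.mono' (hf.norm.pow 2)
    (h.mono fun a ha => by simpa using ha))).integrable one_le_two

theorem abs_integral_sub_le_integral_mul {f g F : α → ℝ} (hf : Integrable f μ)
    (hg : Integrable g μ) (hF : Integrable F μ) {δ : ℝ} (h : ∀ᵐ a ∂μ, |f a - g a| ≤ F a * δ) :
    |∫ a, f a ∂μ - ∫ a, g a ∂μ| ≤ (∫ a, F a ∂μ) * δ := by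
  simp only [← Real.norm_eq_abs] at h ⊢
  rw [← integral_sub hf hg, ← integral_mul_const]
  exact norm_integral_le_of_norm_le (hF.mul_const δ) h

end Integral

section Kernel

variable {d : ℕ} {σ σ' : ℝ → ℝ} {Cσ Cσ' : ℝ}

theorem integrable_abs_add_norm_of_second_moment
    {μ : Measure (ℝ × ℝ × EuclideanSpace ℝ (Fin d) × ℝ)} [IsFiniteMeasure μ]
    (hmoment : Integrable (fun p => |p.2.1| ^ 2 + ‖p.2.2.1‖ ^ 2 + |p.2.2.2| ^ 2) μ) :
    Integrable (fun p => |p.2.1| + ‖p.2.2.1‖) μ :=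
  (integrable_of_norm_sq_le (by fun_prop) hmoment (ae_of_all _ fun p => by
      rw [Real.norm_eq_abs]; linarith [sq_nonneg ‖p.2.2.1‖, sq_nonneg |p.2.2.2|])).abs.add
    (integrable_of_norm_sq_le (by fun_prop) hmoment (ae_of_all _ fun p => by
      linarith [sq_nonneg |p.2.1|, sq_nonneg |p.2.2.2|])).norm

theorem continuous_nnk (hσ : Continuous σ) (hσ' : Continuous σ') (t : ℝ)
    (x : EuclideanSpace ℝ (Fin d)) (t' : ℝ) (x' : EuclideanSpace ℝ (Fin d)) :
    Continuous (nnk d σ σ' t x t' x') := by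
  unfold nnk; fun_prop

theorem abs_nnk_le (hσ_bdd : ∀ y, |σ y| ≤ Cσ) (hσ'_bdd : ∀ y, |σ' y| ≤ Cσ') (t : ℝ)
    (x : EuclideanSpace ℝ (Fin d)) (t' : ℝ) (x' : EuclideanSpace ℝ (Fin d))
    (p : ℝ × ℝ × EuclideanSpace ℝ (Fin d) × ℝ) :
    |nnk d σ σ' t x t' x' p| ≤ Cσ ^ 2 + p.1 ^ 2 * Cσ' ^ 2 * |t * t' + inner ℝ x x' + 1| := by
  have hCσ : 0 ≤ Cσ := (abs_nonneg _).trans (hσ_bdd 0)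
  have hCσ' : 0 ≤ Cσ' := (abs_nonneg _).trans (hσ'_bdd 0)
  obtain ⟨c, w, v, η⟩ := p
  set a := w * t + inner ℝ v x + η
  set b := w * t' + inner ℝ v x' + η
  set P := t * t' + inner ℝ x x' + 1
  calc |nnk d σ σ' t x t' x' (c, w, v, η)|
      ≤ |σ a * σ b| + |c ^ 2 * σ' a * σ' b * P| := abs_add_le _ _
    _ = |σ a| * |σ b| + c ^ 2 * (|σ' a| * |σ' b|) * |P| := by
      simp only [abs_mul, abs_pow, sq_abs]; ring
    _ ≤ Cσ * Cσ + c ^ 2 * (Cσ' * Cσ') * |P| := by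
      gcongr
      exacts [hσ_bdd a, hσ_bdd b, hσ'_bdd a, hσ'_bdd b]
    _ = Cσ ^ 2 + c ^ 2 * Cσ' ^ 2 * |P| := by ring

theorem integrable_nnk {μ : Measure (ℝ × ℝ × EuclideanSpace ℝ (Fin d) × ℝ)} [IsFiniteMeasure μ]
    (hσ : Continuous σ) (hσ' : Continuous σ') (hσ_bdd : ∀ y, |σ y| ≤ Cσ)
    (hσ'_bdd : ∀ y, |σ' y| ≤ Cσ') {R : ℝ} (hc : ∀ᵐ p ∂μ, |p.1| ≤ R) (t : ℝ)
    (x : EuclideanSpace ℝ (Fin d)) (t' : ℝ) (x' : EuclideanSpace ℝ (Fin d)) :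
    Integrable (nnk d σ σ' t x t' x') μ := by
  refine Integrable.of_bound (continuous_nnk hσ hσ' t x t' x').aestronglyMeasurable
    (Cσ ^ 2 + R ^ 2 * Cσ' ^ 2 * |t * t' + inner ℝ x x' + 1|) (hc.mono fun p hp => ?_)
  refine (abs_nnk_le hσ_bdd hσ'_bdd t x t' x' p).trans ?_
  have hc2 : p.1 ^ 2 ≤ R ^ 2 := sq_le_sq.2 (hp.trans (le_abs_self R))
  gcongr

theorem abs_nnk_sub_nnk_le {Kσ Kσ' : ℝ≥0} (hσ_bdd : ∀ y, |σ y| ≤ Cσ)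
    (hσ_lip : LipschitzWith Kσ σ) (hσ'_bdd : ∀ y, |σ' y| ≤ Cσ') (hσ'_lip : LipschitzWith Kσ' σ')
    {t₁ t₂ t' : ℝ} {x₁ x₂ x' : EuclideanSpace ℝ (Fin d)} {M : ℝ}
    (hM : |t₁ * t' + inner ℝ x₁ x' + 1| ≤ M) (p : ℝ × ℝ × EuclideanSpace ℝ (Fin d) × ℝ) :
    |nnk d σ σ' t₁ x₁ t' x' p - nnk d σ σ' t₂ x₂ t' x' p| ≤
      ((Kσ * Cσ + p.1 ^ 2 * (Cσ' * Kσ' * M)) * (|p.2.1| + ‖p.2.2.1‖) +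
        p.1 ^ 2 * (Cσ' ^ 2 * (|t'| + ‖x'‖))) * (|t₁ - t₂| + ‖x₁ - x₂‖) := by
  have hCσ : 0 ≤ Cσ := (abs_nonneg _).trans (hσ_bdd 0)
  have hCσ' : 0 ≤ Cσ' := (abs_nonneg _).trans (hσ'_bdd 0)
  obtain ⟨c, w, v, η⟩ := p
  set Δ := |t₁ - t₂| + ‖x₁ - x₂‖
  set a₁ := w * t₁ + inner ℝ v x₁ + η
  set a₂ := w * t₂ + inner ℝ v x₂ + η
  set b := w * t' + inner ℝ v x' + η
  set P₁ := t₁ * t' + inner ℝ x₁ x' + 1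
  set P₂ := t₂ * t' + inner ℝ x₂ x' + 1
  have ha : |a₁ - a₂| ≤ (|w| + ‖v‖) * Δ := abs_affine_sub_affine_le w t₁ t₂ v x₁ x₂ η
  have hP : |P₁ - P₂| ≤ (|t'| + ‖x'‖) * Δ := by
    simpa only [mul_comm t', real_inner_comm x₁ x', real_inner_comm x₂ x'] using
      abs_affine_sub_affine_le t' t₁ t₂ x' x₁ x₂ 1
  have hσa : |σ a₁ - σ a₂| ≤ Kσ * ((|w| + ‖v‖) * Δ) :=
    (abs_sub_le_of_lipschitzWith hσ_lip a₁ a₂).trans (by gcongr)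
  have hσ'a : |σ' a₁ - σ' a₂| ≤ Kσ' * ((|w| + ‖v‖) * Δ) :=
    (abs_sub_le_of_lipschitzWith hσ'_lip a₁ a₂).trans (by gcongr)
  have hsplit : nnk d σ σ' t₁ x₁ t' x' (c, w, v, η) - nnk d σ σ' t₂ x₂ t' x' (c, w, v, η) =
      (σ a₁ - σ a₂) * σ b + c ^ 2 * σ' b * (σ' a₁ * P₁ - σ' a₂ * P₂) := by
    simp only [nnk]; ring
  rw [hsplit]
  calc |(σ a₁ - σ a₂) * σ b + c ^ 2 * σ' b * (σ' a₁ * P₁ - σ' a₂ * P₂)|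
      ≤ |σ a₁ - σ a₂| * |σ b| +
          c ^ 2 * |σ' b| * (|σ' a₁ - σ' a₂| * |P₁| + |σ' a₂| * |P₁ - P₂|) := by
        refine (abs_add_le _ _).trans ?_
        rw [abs_mul, abs_mul, abs_mul, abs_pow, sq_abs]
        gcongr
        exact abs_mul_sub_mul_le _ _ _ _
    _ ≤ Kσ * ((|w| + ‖v‖) * Δ) * Cσ +
          c ^ 2 * Cσ' * (Kσ' * ((|w| + ‖v‖) * Δ) * M + Cσ' * ((|t'| + ‖x'‖) * Δ)) := by
        gcongr <;> first | assumption | exact hσ_bdd _ | exact hσ'_bdd _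
    _ = ((Kσ * Cσ + c ^ 2 * (Cσ' * Kσ' * M)) * (|w| + ‖v‖) +
          c ^ 2 * (Cσ' ^ 2 * (|t'| + ‖x'‖))) * Δ := by ring

end Kernel

theorem nnB_lipschitz_general
    (d : ℕ) (T : ℝ)
    (D : Set (EuclideanSpace ℝ (Fin d)))
    (R_D : ℝ) (hD_sub : D ⊆ Metric.closedBall 0 R_D)
    (σ σ' : ℝ → ℝ) (C_σ L_σ C_σ' L_σ' : ℝ)
    (hσ_bdd : ∀ y : ℝ, |σ y| ≤ C_σ) (hσ_lip : LipschitzWith (Real.toNNReal L_σ) σ)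
    (hσ'_bdd : ∀ y : ℝ, |σ' y| ≤ C_σ') (hσ'_lip : LipschitzWith (Real.toNNReal L_σ') σ')
    (μ₀ : Measure (ℝ × ℝ × EuclideanSpace ℝ (Fin d) × ℝ)) [IsProbabilityMeasure μ₀]
    (hc_supp : ∃ R : ℝ, μ₀ {p | R < |p.1|} = 0)
    (hmoment : Integrable
      (fun p : ℝ × ℝ × EuclideanSpace ℝ (Fin d) × ℝ =>
        |p.2.1| ^ 2 + ‖p.2.2.1‖ ^ 2 + |p.2.2.2| ^ 2) μ₀) :
    ∃ L_B : ℝ, ∀ t₁ ∈ Icc (0:ℝ) T, ∀ t₂ ∈ Icc (0:ℝ) T, ∀ t' ∈ Icc (0:ℝ) T,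
      ∀ x₁ ∈ D, ∀ x₂ ∈ D, ∀ x' ∈ D,
        |nnB d σ σ' μ₀ t₁ x₁ t' x' - nnB d σ σ' μ₀ t₂ x₂ t' x'| ≤
          L_B * (|t₁ - t₂| + ‖x₁ - x₂‖) := by
  obtain ⟨R, hR⟩ := hc_supp
  have hc : ∀ᵐ p ∂μ₀, |p.1| ≤ R := by rw [ae_iff]; simpa only [not_le] using hR
  have hCσ' : 0 ≤ C_σ' := (abs_nonneg _).trans (hσ'_bdd 0)
  set F := fun p : ℝ × ℝ × EuclideanSpace ℝ (Fin d) × ℝ =>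
    (L_σ.toNNReal * C_σ + R ^ 2 * (C_σ' * L_σ'.toNNReal * (T ^ 2 + R_D ^ 2 + 1))) *
      (|p.2.1| + ‖p.2.2.1‖) + R ^ 2 * (C_σ' ^ 2 * (T + R_D))
  have hF : Integrable F μ₀ :=
    ((integrable_abs_add_norm_of_second_moment hmoment).const_mul _).add (integrable_const _)
  refine ⟨∫ p, F p ∂μ₀, fun t₁ ht₁ t₂ ht₂ t' ht' x₁ hx₁ x₂ hx₂ x' hx' => ?_⟩
  have hnorm : ∀ x ∈ D, ‖x‖ ≤ R_D := fun x hx => mem_closedBall_zero_iff.1 (hD_sub hx)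
  have habs : ∀ t ∈ Icc (0:ℝ) T, |t| ≤ T := fun t ht => (abs_of_nonneg ht.1).trans_le ht.2
  have hM := abs_mul_add_inner_add_one_le (habs t₁ ht₁) (habs t' ht') (hnorm x₁ hx₁) (hnorm x' hx')
  refine abs_integral_sub_le_integral_mul
    (integrable_nnk hσ_lip.continuous hσ'_lip.continuous hσ_bdd hσ'_bdd hc _ _ _ _)
    (integrable_nnk hσ_lip.continuous hσ'_lip.continuous hσ_bdd hσ'_bdd hc _ _ _ _) hF
    (hc.mono fun p hp => (abs_nnk_sub_nnk_le hσ_bdd hσ_lip hσ'_bdd hσ'_lip hM p).trans ?_)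
  have hc2 : p.1 ^ 2 ≤ R ^ 2 := sq_le_sq.2 (hp.trans (le_abs_self R))
  simp only [F]
  gcongr
  exacts [habs t' ht', hnorm x' hx']

/-- Lipschitz continuity of the kernel `B₀` in the time-space
variables: there is a constant `L_B` with
`|B₀(t¹,x¹,t',x') − B₀(t²,x²,t',x')| ≤ L_B (|t¹−t²| + ‖x¹−x²‖)`
for all `t¹,t²,t' ∈ [0,T]` and `x¹,x²,x' ∈ D`. -/
theorem nnB_lipschitz
    (d : ℕ) (hd : 1 ≤ d) (T : ℝ) (hT : 0 < T)
    (D : Set (EuclideanSpace ℝ (Fin d))) (hD_ne : D.Nonempty) (hD_open : IsOpen D)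
    (R_D : ℝ) (hD_sub : D ⊆ Metric.closedBall 0 R_D) (hD_vol : volume D < ⊤)
    (σ σ' : ℝ → ℝ) (C_σ L_σ C_σ' L_σ' : ℝ)
    (hσ_bdd : ∀ y : ℝ, |σ y| ≤ C_σ) (hσ_lip : LipschitzWith (Real.toNNReal L_σ) σ)
    (hσ_deriv : ∀ y : ℝ, HasDerivAt σ (σ' y) y)
    (hσ'_bdd : ∀ y : ℝ, |σ' y| ≤ C_σ') (hσ'_lip : LipschitzWith (Real.toNNReal L_σ') σ')
    (μ₀ : Measure (ℝ × ℝ × EuclideanSpace ℝ (Fin d) × ℝ)) [IsProbabilityMeasure μ₀]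
    (hc_supp : ∃ R : ℝ, μ₀ {p | R < |p.1|} = 0)
    (hmoment : Integrable
      (fun p : ℝ × ℝ × EuclideanSpace ℝ (Fin d) × ℝ =>
        |p.2.1| ^ 2 + ‖p.2.2.1‖ ^ 2 + |p.2.2.2| ^ 2) μ₀) :
    ∃ L_B : ℝ, ∀ t₁ ∈ Icc (0:ℝ) T, ∀ t₂ ∈ Icc (0:ℝ) T, ∀ t' ∈ Icc (0:ℝ) T,
      ∀ x₁ ∈ D, ∀ x₂ ∈ D, ∀ x' ∈ D,
        |nnB d σ σ' μ₀ t₁ x₁ t' x' - nnB d σ σ' μ₀ t₂ x₂ t' x'| ≤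
          L_B * (|t₁ - t₂| + ‖x₁ - x₂‖) :=
  nnB_lipschitz_general d T D R_D hD_sub σ σ' C_σ L_σ C_σ' L_σ' hσ_bdd hσ_lip hσ'_bdd hσ'_lip μ₀
    hc_supp hmoment
end
end

section
/- Let α : [0,∞) → (0,∞) be antitone (non-increasing) with ∫₀^∞ α(s) ds = ∞, let Q : [0,∞) → [0,∞) be continuous, and let J : [0,∞) → [0,∞) be differentiable with J'(τ) = −α(τ) Q(τ) for every τ ≥ 0. Then liminf_{τ→∞} Q(τ) = 0. -/
/-!
If `Q ≥ ε > 0` from some time `T` on, then `ε ∫_T^t α ≤ J T - J t ≤ J T` for every `t ≥ T`,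
so `α` would be integrable on `(T, ∞)`; being antitone it is also integrable on `(0, T]`,
contradicting `∫₀^∞ α = ∞`. So the nonnegative `Q` is frequently below every `ε > 0`.
-/

open MeasureTheory Set Filter

theorem Filter.liminf_eq_zero_of_frequently_le {ι : Type*} {l : Filter ι} {f : ι → ℝ}
    (h_nonneg : ∀ᶠ x in l, 0 ≤ f x) (h_small : ∀ ε > 0, ∃ᶠ x in l, f x ≤ ε) :
    liminf f l = 0 := by
  have h_bdd : IsBoundedUnder (· ≥ ·) l f := isBoundedUnder_of_eventually_ge h_nonneg
  have h_cobdd : IsCoboundedUnder (· ≥ ·) l f :=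
    IsCoboundedUnder.of_frequently_le (h_small 1 one_pos)
  refine le_antisymm (le_of_forall_pos_le_add fun ε hε => ?_) (le_liminf_of_le h_cobdd h_nonneg)
  simpa using liminf_le_of_frequently_le (h_small ε hε) h_bdd

section EnergyDissipation

variable {α Q J : ℝ → ℝ} {ε : ℝ}

theorem mul_integral_le_sub_of_hasDerivAt_neg_mul {a b : ℝ} (hab : a ≤ b)
    (hα_nonneg : ∀ x ∈ Ioo a b, 0 ≤ α x) (hα_int : IntegrableOn α (Icc a b))
    (hQ : ∀ x ∈ Ioo a b, ε ≤ Q x) (hJ : ∀ x ∈ Icc a b, HasDerivAt J (-(α x * Q x)) x) :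
    ε * ∫ x in a..b, α x ≤ J a - J b := by
  have h_cont : ContinuousOn J (Icc a b) := fun x hx => (hJ x hx).continuousAt.continuousWithinAt
  have h := intervalIntegral.sub_le_integral_of_hasDeriv_right_of_le hab h_cont
    (fun x hx => (hJ x (Ioo_subset_Icc_self hx)).hasDerivWithinAt) (φ := fun x => -(ε * α x))
    (hα_int.const_mul ε).neg (fun x hx => neg_le_neg (by nlinarith [hα_nonneg x hx, hQ x hx]))
  rw [intervalIntegral.integral_neg, intervalIntegral.integral_const_mul] at h
  linarith

theorem integrableOn_Ioi_of_hasDerivAt_neg_mul {a : ℝ} (hε : 0 < ε)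
    (hα_nonneg : ∀ x ∈ Ici a, 0 ≤ α x) (hα_int : ∀ b, IntegrableOn α (Icc a b))
    (hQ : ∀ x ∈ Ici a, ε ≤ Q x) (hJ_nonneg : ∀ x ∈ Ici a, 0 ≤ J x)
    (hJ : ∀ x ∈ Ici a, HasDerivAt J (-(α x * Q x)) x) :
    IntegrableOn α (Ioi a) := by
  refine integrableOn_Ioi_of_intervalIntegral_norm_bounded (J a / ε) a
    (fun b => (hα_int b).mono_set Ioc_subset_Icc_self) tendsto_id ?_
  filter_upwards [eventually_ge_atTop a] with b hab
  have h_norm : ∫ x in a..b, ‖α x‖ = ∫ x in a..b, α x := by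
    refine intervalIntegral.integral_congr fun x hx => Real.norm_of_nonneg (hα_nonneg x ?_)
    exact (uIcc_of_le hab ▸ hx).1
  have h_energy := mul_integral_le_sub_of_hasDerivAt_neg_mul hab
    (fun x hx => hα_nonneg x hx.1.le) (hα_int b) (fun x hx => hQ x hx.1.le)
    (fun x hx => hJ x hx.1)
  rw [h_norm, le_div_iff₀ hε]
  linarith [hJ_nonneg b hab]

end EnergyDissipation

theorem liminf_Q_eq_zero_general
    (α Q J : ℝ → ℝ)
    (hα_pos : ∀ τ : ℝ, 0 ≤ τ → 0 < α τ)
    (hα_anti : AntitoneOn α (Ici 0))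
    (hα_int : ∫⁻ s in Ioi (0:ℝ), ENNReal.ofReal (α s) = ⊤)
    (hQ_nonneg : ∀ τ : ℝ, 0 ≤ τ → 0 ≤ Q τ)
    (hJ_nonneg : ∀ τ : ℝ, 0 ≤ τ → 0 ≤ J τ)
    (hJ_deriv : ∀ τ : ℝ, 0 ≤ τ → HasDerivAt J (-(α τ * Q τ)) τ) :
    liminf Q atTop = 0 := by
  refine liminf_eq_zero_of_frequently_le (eventually_atTop.2 ⟨0, hQ_nonneg⟩) fun ε hε => ?_
  by_contra h_large
  obtain ⟨T₀, hT₀⟩ := eventually_atTop.1 (not_frequently.1 h_large)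
  set T := max T₀ 0
  have hT : 0 ≤ T := le_max_right _ _
  have h_tail : IntegrableOn α (Ioi T) :=
    integrableOn_Ioi_of_hasDerivAt_neg_mul hε (fun x hx => (hα_pos x (hT.trans hx)).le)
      (fun b => (hα_anti.mono fun x hx => hT.trans hx.1).integrableOn_isCompact isCompact_Icc)
      (fun x hx => (not_le.1 (hT₀ x (le_of_max_le_left hx))).le)
      (fun x hx => hJ_nonneg x (hT.trans hx)) (fun x hx => hJ_deriv x (hT.trans hx))
  have h_head : IntegrableOn α (Ioc 0 T) :=
    ((hα_anti.mono Icc_subset_Ici_self).integrableOn_isCompact isCompact_Icc).mono_set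
      Ioc_subset_Icc_self
  have h_finite : ∫⁻ s in Ioi 0, ‖α s‖ₑ < ⊤ := (Ioc_union_Ioi_eq_Ioi hT ▸ h_head.union h_tail).2
  have h_infinite : ∫⁻ s in Ioi 0, ‖α s‖ₑ = ⊤ :=
    eq_top_iff.2 (hα_int ▸ lintegral_mono fun x => Real.ofReal_le_enorm (α x))
  exact h_finite.ne h_infinite

/-- first step of the cycle-of-stopping-times argument:
if `α : [0,∞) → (0,∞)` is non-increasing with `∫₀^∞ α = ∞`, `Q : [0,∞) → [0,∞)` is
continuous, and `J : [0,∞) → [0,∞)` is differentiable with `J' = −α·Q`, then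
`liminf_{τ→∞} Q(τ) = 0`. -/
theorem liminf_Q_eq_zero
    (α Q J : ℝ → ℝ)
    (hα_pos : ∀ τ : ℝ, 0 ≤ τ → 0 < α τ)
    (hα_anti : AntitoneOn α (Ici 0))
    (hα_int : ∫⁻ s in Ioi (0:ℝ), ENNReal.ofReal (α s) = ⊤)
    (hQ_cont : ContinuousOn Q (Ici 0))
    (hQ_nonneg : ∀ τ : ℝ, 0 ≤ τ → 0 ≤ Q τ)
    (hJ_nonneg : ∀ τ : ℝ, 0 ≤ τ → 0 ≤ J τ)
    (hJ_deriv : ∀ τ : ℝ, 0 ≤ τ → HasDerivAt J (-(α τ * Q τ)) τ) :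
    liminf Q atTop = 0 :=
  liminf_Q_eq_zero_general α Q J hα_pos hα_anti hα_int hQ_nonneg hJ_nonneg hJ_deriv
end

section
/- Let α : [0,∞) → (0,∞) be antitone (non-increasing) with ∫₀^∞ α(s) ds = ∞ and ∫₀^∞ α(s)² ds < ∞, let L > 0, let Q : [0,∞) → [0,∞) satisfy |Q(τ₂) − Q(τ₁)| ≤ L ∫_{τ₁}^{τ₂} α(s) ds for all 0 ≤ τ₁ ≤ τ₂, and let J : [0,∞) → [0,∞) be differentiable with J'(τ) = −α(τ) Q(τ) for every τ ≥ 0. Then lim_{τ→∞} Q(τ) = 0. -/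
open MeasureTheory Set Filter Topology

/-!
Write `A(τ) = ∫₀^τ α`, which tends to infinity. Since `J' = -αQ ≤ 0` and `J ≥ 0`, `J` converges,
so `J τ - J σ` is small for all large `τ ≤ σ`. If `Q τ ≥ ε` with `τ` large, the increment bound
keeps `Q ≥ ε/2` on the window `[τ, σ]` where `A σ - A τ = ε/(2L)`, and integrating `J' ≤ -(ε/2) α`
over that window gives `J τ - J σ ≥ ε²/(4L)`, a contradiction.
-/

theorem tendsto_intervalIntegral_atTop_of_lintegral_eq_top {f : ℝ → ℝ} {a : ℝ}
    (hfi : ∀ b, a ≤ b → IntervalIntegrable f volume a b) (hf : ∀ x, a < x → 0 ≤ f x)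
    (htop : ∫⁻ x in Ioi a, ENNReal.ofReal (f x) = ⊤) :
    Tendsto (fun b => ∫ x in a..b, f x) atTop atTop := by
  have hmono : MonotoneOn (fun b => ∫ x in a..b, f x) (Ici a) := fun b hb b' hb' hbb' =>
    intervalIntegral.integral_mono_interval le_rfl hb hbb'
      (ae_restrict_of_forall_mem measurableSet_Ioc fun x hx => hf x hx.1) (hfi b' hb')
  have hcover : ⋃ n : ℕ, Ioc a (a + n) = Ioi a :=
    iUnion_Ioc_eq_Ioi_self_iff.2 fun x _ =>
      (exists_nat_ge (x - a)).imp fun _ hn => by linarith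
  have hsup : ⨆ n : ℕ, ENNReal.ofReal (∫ x in a..a + n, f x) = ⊤ := by
    rw [← htop, ← hcover, setLIntegral_iUnion_of_directed _
      (Monotone.directed_le fun m n hmn => Ioc_subset_Ioc_right (by gcongr))]
    congr 1
    ext n
    have han : a ≤ a + n := le_add_of_nonneg_right n.cast_nonneg
    rw [intervalIntegral.integral_of_le han,
      ofReal_integral_eq_lintegral_ofReal (hfi _ han).1
        (ae_restrict_of_forall_mem measurableSet_Ioc fun x hx => hf x hx.1)]
  refine tendsto_atTop_atTop.2 fun C => ?_
  obtain ⟨n, hn⟩ : ∃ n : ℕ, ENNReal.ofReal C < ENNReal.ofReal (∫ x in a..a + n, f x) :=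
    lt_iSup_iff.1 (hsup ▸ ENNReal.ofReal_lt_top)
  have han : a ≤ a + n := le_add_of_nonneg_right n.cast_nonneg
  exact ⟨a + n, fun b hb =>
    (ENNReal.ofReal_lt_ofReal_iff'.1 hn).1.le.trans (hmono han (han.trans hb) hb)⟩

theorem exists_intervalIntegral_eq_of_tendsto_atTop {f : ℝ → ℝ} {a τ m : ℝ} (hτ : a ≤ τ)
    (hm : 0 ≤ m) (hfi : ∀ b, a ≤ b → IntervalIntegrable f volume a b)
    (htop : Tendsto (fun b => ∫ x in a..b, f x) atTop atTop) :
    ∃ σ, τ ≤ σ ∧ ∫ x in τ..σ, f x = m := by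
  obtain ⟨b, hmb, hτb⟩ :=
    ((htop.eventually_ge_atTop ((∫ x in a..τ, f x) + m)).and (eventually_ge_atTop τ)).exists
  have hcont : ContinuousOn (fun b => ∫ x in a..b, f x) (Icc τ b) :=
    (intervalIntegral.continuousOn_primitive_interval' (hfi b (hτ.trans hτb))
      left_mem_uIcc).mono (by rw [uIcc_of_le (hτ.trans hτb)]; exact Icc_subset_Icc_left hτ)
  obtain ⟨σ, hσ, hσm⟩ := intermediate_value_Icc hτb hcont
    ⟨le_add_of_nonneg_right hm, hmb⟩
  refine ⟨σ, hσ.1, ?_⟩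
  rw [← intervalIntegral.integral_interval_sub_left (hfi σ (hτ.trans hσ.1)) (hfi τ hτ)]
  simp only at hσm
  linarith

theorem AntitoneOn.exists_tendsto_atTop {ι : Type*} [LinearOrder ι] {J : ι → ℝ} {a : ι} {b : ℝ}
    (hJ : AntitoneOn J (Ici a)) (hb : ∀ x, a ≤ x → b ≤ J x) : ∃ ℓ, Tendsto J atTop (𝓝 ℓ) := by
  have hanti : Antitone fun x => J (max x a) := fun x y hxy =>
    hJ (le_max_right x a) (le_max_right y a) (max_le_max hxy le_rfl)
  refine ⟨_, (tendsto_atTop_ciInf hanti ⟨b, ?_⟩).congr' ?_⟩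
  · rintro _ ⟨x, rfl⟩
    exact hb _ (le_max_right x a)
  · filter_upwards [eventually_ge_atTop a] with x hx
    rw [max_eq_left hx]

theorem sub_mul_intervalIntegral_le_of_abs_sub_le {α Q : ℝ → ℝ} {L τ σ : ℝ} (hL : 0 ≤ L)
    (hαi : IntervalIntegrable α volume τ σ) (hα : ∀ t ∈ Icc τ σ, 0 ≤ α t)
    (hQ : ∀ s ∈ Icc τ σ, |Q s - Q τ| ≤ L * ∫ t in τ..s, α t) :
    ∀ s ∈ Icc τ σ, Q τ - L * ∫ t in τ..σ, α t ≤ Q s := by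
  intro s hs
  have hmono : ∫ t in τ..s, α t ≤ ∫ t in τ..σ, α t :=
    intervalIntegral.integral_mono_interval le_rfl hs.1 hs.2
      (ae_restrict_of_forall_mem measurableSet_Ioc fun t ht => hα t (Ioc_subset_Icc_self ht))
      hαi
  have := neg_abs_le (Q s - Q τ)
  nlinarith [hQ s hs]

theorem mul_intervalIntegral_le_sub_of_hasDerivAt {α Q J : ℝ → ℝ} {a b q : ℝ} (hab : a ≤ b)
    (hJ : ∀ t ∈ Icc a b, HasDerivAt J (-(α t * Q t)) t) (hαi : IntervalIntegrable α volume a b)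
    (hα : ∀ t ∈ Icc a b, 0 ≤ α t) (hQ : ∀ t ∈ Icc a b, q ≤ Q t) :
    q * ∫ t in a..b, α t ≤ J a - J b := by
  have h := intervalIntegral.sub_le_integral_of_hasDeriv_right_of_le (φ := fun t => -(q * α t))
    hab (fun t ht => (hJ t ht).continuousAt.continuousWithinAt)
    (fun t ht => (hJ t (Ioo_subset_Icc_self ht)).hasDerivWithinAt)
    ((intervalIntegrable_iff_integrableOn_Icc_of_le hab).1 (hαi.const_mul q).neg)
    (fun t ht => by
      have ht' := Ioo_subset_Icc_self ht
      nlinarith [hα t ht', hQ t ht'])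
  rw [intervalIntegral.integral_neg, intervalIntegral.integral_const_mul] at h
  linarith

theorem mul_intervalIntegral_le_sub_of_abs_sub_le {α Q J : ℝ → ℝ} {L τ σ : ℝ} (hL : 0 ≤ L)
    (hτσ : τ ≤ σ) (hJ : ∀ t ∈ Icc τ σ, HasDerivAt J (-(α t * Q t)) t)
    (hαi : IntervalIntegrable α volume τ σ) (hα : ∀ t ∈ Icc τ σ, 0 ≤ α t)
    (hQ : ∀ s ∈ Icc τ σ, |Q s - Q τ| ≤ L * ∫ t in τ..s, α t) :
    (Q τ - L * ∫ t in τ..σ, α t) * ∫ t in τ..σ, α t ≤ J τ - J σ :=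
  mul_intervalIntegral_le_sub_of_hasDerivAt hτσ hJ hαi hα
    (sub_mul_intervalIntegral_le_of_abs_sub_le hL hαi hα hQ)

theorem Q_tendsto_zero_general
    (L : ℝ) (hL : 0 < L) (α Q J : ℝ → ℝ)
    (hα_pos : ∀ τ : ℝ, 0 ≤ τ → 0 < α τ)
    (hα_anti : AntitoneOn α (Ici 0))
    (hα_int : ∫⁻ s in Ioi (0:ℝ), ENNReal.ofReal (α s) = ⊤)
    (hQ_nonneg : ∀ τ : ℝ, 0 ≤ τ → 0 ≤ Q τ)
    (hQ_reg : ∀ τ₁ τ₂ : ℝ, 0 ≤ τ₁ → τ₁ ≤ τ₂ →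
      |Q τ₂ - Q τ₁| ≤ L * ∫ s in τ₁..τ₂, α s)
    (hJ_nonneg : ∀ τ : ℝ, 0 ≤ τ → 0 ≤ J τ)
    (hJ_deriv : ∀ τ : ℝ, 0 ≤ τ → HasDerivAt J (-(α τ * Q τ)) τ) :
    Tendsto Q atTop (nhds 0) := by
  have hαi : ∀ a, 0 ≤ a → ∀ b, a ≤ b → IntervalIntegrable α volume a b := fun a ha b hab =>
    (hα_anti.mono fun t ht => ha.trans (uIcc_of_le hab ▸ ht).1).intervalIntegrable
  have hJ_anti : AntitoneOn J (Ici 0) := fun a ha b _ hab => by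
    simpa using mul_intervalIntegral_le_sub_of_hasDerivAt (q := 0) hab
      (fun t ht => hJ_deriv t (ha.trans ht.1)) (hαi a ha b hab)
      (fun t ht => (hα_pos t (ha.trans ht.1)).le) (fun t ht => hQ_nonneg t (ha.trans ht.1))
  obtain ⟨ℓ, hℓ⟩ := hJ_anti.exists_tendsto_atTop hJ_nonneg
  have hA : Tendsto (fun b => ∫ s in (0:ℝ)..b, α s) atTop atTop :=
    tendsto_intervalIntegral_atTop_of_lintegral_eq_top (hαi 0 le_rfl)
      (fun x hx => (hα_pos x hx.le).le) hα_int
  rw [Metric.tendsto_atTop]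
  intro ε hε
  set m := ε / (2 * L)
  have hm : 0 < m := by positivity
  have hLm : L * m = ε / 2 := by simp only [m]; field_simp
  obtain ⟨N, hN⟩ := Metric.cauchySeq_iff.1 hℓ.cauchySeq (ε / 2 * m) (by positivity)
  refine ⟨max N 0, fun τ hτ => ?_⟩
  have hτ0 : 0 ≤ τ := (le_max_right N 0).trans hτ
  rw [Real.dist_eq, sub_zero, abs_of_nonneg (hQ_nonneg τ hτ0)]
  by_contra! hQτ
  obtain ⟨σ, hτσ, hσ⟩ :=
    exists_intervalIntegral_eq_of_tendsto_atTop hτ0 hm.le (hαi 0 le_rfl) hA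
  have hdrop := mul_intervalIntegral_le_sub_of_abs_sub_le hL.le hτσ
    (fun t ht => hJ_deriv t (hτ0.trans ht.1)) (hαi τ hτ0 σ hτσ)
    (fun t ht => (hα_pos t (hτ0.trans ht.1)).le) (fun s hs => hQ_reg τ s hτ0 hs.1)
  have hJ_close := hN τ ((le_max_left N 0).trans hτ) σ ((le_max_left N 0).trans (hτ.trans hτσ))
  rw [hσ, hLm] at hdrop
  rw [Real.dist_eq] at hJ_close
  nlinarith [le_abs_self (J τ - J σ)]

/-- abstract cycle-of-stopping-times convergence result: if
`α : [0,∞) → (0,∞)` is non-increasing with `∫₀^∞ α = ∞` and `∫₀^∞ α² < ∞`, the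
nonnegative quantity `Q` has increments controlled by `L` times the learning-rate mass,
and the nonnegative loss `J` is differentiable with `J' = −α·Q`, then `Q(τ) → 0` as
`τ → ∞`. -/
theorem Q_tendsto_zero
    (L : ℝ) (hL : 0 < L) (α Q J : ℝ → ℝ)
    (hα_pos : ∀ τ : ℝ, 0 ≤ τ → 0 < α τ)
    (hα_anti : AntitoneOn α (Ici 0))
    (hα_int : ∫⁻ s in Ioi (0:ℝ), ENNReal.ofReal (α s) = ⊤)
    (hα_sq : ∫⁻ s in Ioi (0:ℝ), ENNReal.ofReal (α s ^ 2) < ⊤)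
    (hQ_nonneg : ∀ τ : ℝ, 0 ≤ τ → 0 ≤ Q τ)
    (hQ_reg : ∀ τ₁ τ₂ : ℝ, 0 ≤ τ₁ → τ₁ ≤ τ₂ →
      |Q τ₂ - Q τ₁| ≤ L * ∫ s in τ₁..τ₂, α s)
    (hJ_nonneg : ∀ τ : ℝ, 0 ≤ τ → 0 ≤ J τ)
    (hJ_deriv : ∀ τ : ℝ, 0 ≤ τ → HasDerivAt J (-(α τ * Q τ)) τ) :
    Tendsto Q atTop (nhds 0) :=
  Q_tendsto_zero_general L hL α Q J hα_pos hα_anti hα_int hQ_nonneg hQ_reg hJ_nonneg hJ_deriv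
end

section
/- Let n ≥ 1, let J : ℝⁿ → [0,∞) be differentiable with gradient ∇J that is L_J-Lipschitz and satisfies ‖∇J(θ)‖ ≤ C for all θ ∈ ℝⁿ, let α : [0,∞) → (0,∞) be antitone (non-increasing) with ∫₀^∞ α(s) ds = ∞, and let θ : [0,∞) → ℝⁿ be differentiable with θ'(τ) = −α(τ) ∇J(θ(τ)) for all τ ≥ 0. Then ‖∇J(θ(τ))‖ → 0 as τ → ∞, i.e. continuous-time gradient descent converges to a stationary point. -/
/-!
Along the flow `d/dτ J(θ τ) = -α τ ‖∇J(θ τ)‖²`, so `∫₀^∞ α ‖∇J(θ)‖² ≤ J(θ 0)` and the tails of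
this integral vanish. Measured in the clock `∫ α`, the curve `θ` moves with speed at most `C`, so
`‖∇J(θ)‖` is `L_J C`-Lipschitz in that clock. Fix `δ > 0` with `L_J C δ ≤ ε / 2`. If
`‖∇J(θ τ)‖ ≥ ε` at arbitrarily late times `τ`, then during the next `δ` units of clock time (they
exist because `∫ α = ∞`) the gradient stays above `ε / 2`, which costs `(ε / 2)² δ` of an
arbitrarily small tail.
-/

open MeasureTheory Set Filter Topology

section Clock

variable {f : ℝ → ℝ}

theorem integrableOn_Ioi_of_intervalIntegral_le {K : ℝ} (hf_nonneg : ∀ x, 0 ≤ x → 0 ≤ f x)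
    (hf_int : ∀ a b, 0 ≤ a → a ≤ b → IntervalIntegrable f volume a b)
    (hf_bdd : ∀ᶠ b in atTop, ∫ x in 0..b, f x ≤ K) : IntegrableOn f (Ioi 0) := by
  refine integrableOn_Ioi_of_intervalIntegral_norm_bounded K 0 (fun b => ?_) tendsto_id ?_
  · rcases le_total b 0 with hb | hb
    · simp [Ioc_eq_empty_of_le hb]
    · exact (hf_int 0 b le_rfl hb).1
  · filter_upwards [hf_bdd, eventually_ge_atTop 0] with b hbK hb
    refine (intervalIntegral.integral_congr fun x hx => ?_).trans_le hbK
    rw [id, uIcc_of_le hb] at hx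
    exact Real.norm_of_nonneg (hf_nonneg x hx.1)

theorem exists_le_intervalIntegral_of_lintegral_eq_top (hf_nonneg : ∀ x, 0 ≤ x → 0 ≤ f x)
    (hf_int : ∀ a b, 0 ≤ a → a ≤ b → IntervalIntegrable f volume a b)
    (hf_top : ∫⁻ x in Ioi 0, ENNReal.ofReal (f x) = ⊤) {a : ℝ} (ha : 0 ≤ a) (B : ℝ) :
    ∃ b, a ≤ b ∧ B ≤ ∫ x in a..b, f x := by
  by_contra! hB
  have hfi : IntegrableOn f (Ioi 0) := by
    refine integrableOn_Ioi_of_intervalIntegral_le (K := (∫ x in 0..a, f x) + B) hf_nonneg hf_int ?_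
    filter_upwards [eventually_ge_atTop a] with b hab
    rw [← intervalIntegral.integral_add_adjacent_intervals (hf_int 0 a le_rfl ha)
      (hf_int a b ha hab)]
    linarith [hB b hab]
  exact hfi.lintegral_lt_top.ne hf_top

theorem exists_intervalIntegral_eq_of_lintegral_eq_top (hf_nonneg : ∀ x, 0 ≤ x → 0 ≤ f x)
    (hf_int : ∀ a b, 0 ≤ a → a ≤ b → IntervalIntegrable f volume a b)
    (hf_top : ∫⁻ x in Ioi 0, ENNReal.ofReal (f x) = ⊤) {τ δ : ℝ} (hτ : 0 ≤ τ) (hδ : 0 ≤ δ) :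
    ∃ σ, τ ≤ σ ∧ ∫ x in τ..σ, f x = δ := by
  obtain ⟨b, hτb, hδb⟩ := exists_le_intervalIntegral_of_lintegral_eq_top hf_nonneg hf_int hf_top hτ δ
  have hcont : ContinuousOn (fun σ => ∫ x in τ..σ, f x) (Icc τ b) := by
    simpa [uIcc_of_le hτb] using
      intervalIntegral.continuousOn_primitive_interval' (hf_int τ b hτ hτb) left_mem_uIcc
  obtain ⟨σ, hσ, hσδ⟩ := intermediate_value_Icc hτb hcont ⟨by simpa using hδ, hδb⟩
  exact ⟨σ, hσ.1, hσδ⟩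

theorem eventually_forall_intervalIntegral_lt {K c : ℝ} (hf_nonneg : ∀ x, 0 ≤ x → 0 ≤ f x)
    (hf_int : ∀ a b, 0 ≤ a → a ≤ b → IntervalIntegrable f volume a b)
    (hf_bdd : ∀ b, 0 ≤ b → ∫ x in 0..b, f x ≤ K) (hc : 0 < c) :
    ∀ᶠ τ in atTop, ∀ σ, τ ≤ σ → ∫ x in τ..σ, f x < c := by
  have hfi := integrableOn_Ioi_of_intervalIntegral_le hf_nonneg hf_int
    ((eventually_ge_atTop 0).mono hf_bdd)
  obtain ⟨N, hN⟩ :=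
    Metric.cauchySeq_iff.1 (intervalIntegral_tendsto_integral_Ioi 0 hfi tendsto_id).cauchySeq c hc
  filter_upwards [eventually_ge_atTop (max N 0)] with τ hτ σ hτσ
  have hτ0 : 0 ≤ τ := (le_max_right _ _).trans hτ
  have hτN : N ≤ τ := (le_max_left _ _).trans hτ
  rw [← intervalIntegral.integral_interval_sub_left (hf_int 0 σ le_rfl (hτ0.trans hτσ))
    (hf_int 0 τ le_rfl hτ0)]
  exact (le_abs_self _).trans_lt (hN σ (hτN.trans hτσ) τ hτN)

end Clock

theorem sq_mul_le_intervalIntegral_mul_sq {α g : ℝ → ℝ} {L ε δ τ σ : ℝ} (hL : 0 ≤ L)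
    (hτσ : τ ≤ σ) (hα_nonneg : ∀ s ∈ Icc τ σ, 0 ≤ α s) (hα_int : IntervalIntegrable α volume τ σ)
    (hg_cont : ContinuousOn g (Icc τ σ))
    (hg_lip : ∀ s ∈ Icc τ σ, g τ - g s ≤ L * ∫ x in τ..s, α x)
    (hε : 0 ≤ ε) (hgτ : ε ≤ g τ) (hσ : ∫ x in τ..σ, α x = δ) (hLδ : L * δ ≤ ε / 2) :
    (ε / 2) ^ 2 * δ ≤ ∫ s in τ..σ, α s * g s ^ 2 := by
  have hg_half : ∀ s ∈ Icc τ σ, ε / 2 ≤ g s := by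
    intro s hs
    have hαs : ∫ x in τ..s, α x ≤ δ := hσ ▸ intervalIntegral.integral_mono_interval le_rfl hs.1
      hs.2 ((ae_restrict_iff' measurableSet_Ioc).2 (ae_of_all _ fun x hx => hα_nonneg x
        (Ioc_subset_Icc_self hx))) hα_int
    nlinarith [hg_lip s hs, mul_le_mul_of_nonneg_left hαs hL]
  calc (ε / 2) ^ 2 * δ = ∫ s in τ..σ, α s * (ε / 2) ^ 2 := by
        rw [intervalIntegral.integral_mul_const, hσ, mul_comm]
    _ ≤ ∫ s in τ..σ, α s * g s ^ 2 := by
        refine intervalIntegral.integral_mono_on hτσ (hα_int.mul_const _)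
          (hα_int.mul_continuousOn ((uIcc_of_le hτσ).symm ▸ hg_cont.pow 2)) fun s hs => ?_
        exact mul_le_mul_of_nonneg_left (pow_le_pow_left₀ (by positivity) (hg_half s hs) 2)
          (hα_nonneg s hs)

theorem tendsto_zero_of_intervalIntegral_mul_sq_le {α g : ℝ → ℝ} {L K : ℝ} (hL : 0 ≤ L)
    (hα_nonneg : ∀ s, 0 ≤ s → 0 ≤ α s)
    (hα_int : ∀ a b, 0 ≤ a → a ≤ b → IntervalIntegrable α volume a b)
    (hα_top : ∫⁻ s in Ioi 0, ENNReal.ofReal (α s) = ⊤)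
    (hg_nonneg : ∀ s, 0 ≤ g s) (hg_cont : ContinuousOn g (Ici 0))
    (hg_lip : ∀ a b, 0 ≤ a → a ≤ b → g a - g b ≤ L * ∫ s in a..b, α s)
    (hbound : ∀ b, 0 ≤ b → ∫ s in 0..b, α s * g s ^ 2 ≤ K) :
    Tendsto g atTop (𝓝 0) := by
  have hIcc : ∀ {a b : ℝ}, 0 ≤ a → Icc a b ⊆ Ici 0 := fun ha x hx => ha.trans hx.1
  have hαg_int : ∀ a b, 0 ≤ a → a ≤ b →
      IntervalIntegrable (fun s => α s * g s ^ 2) volume a b := fun a b ha hab =>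
    (hα_int a b ha hab).mul_continuousOn ((uIcc_of_le hab).symm ▸ (hg_cont.mono (hIcc ha)).pow 2)
  refine tendsto_order.2 ⟨fun a ha => .of_forall fun τ => ha.trans_le (hg_nonneg τ),
    fun ε hε => ?_⟩
  set δ := ε / (2 * (L + 1))
  have hδ : 0 < δ := by positivity
  have hLδ : L * δ ≤ ε / 2 := by
    rw [mul_div_assoc', div_le_div_iff₀ (by positivity) two_pos]
    nlinarith
  filter_upwards [eventually_forall_intervalIntegral_lt
    (fun s hs => mul_nonneg (hα_nonneg s hs) (sq_nonneg (g s))) hαg_int hbound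
    (c := (ε / 2) ^ 2 * δ) (by positivity), eventually_ge_atTop 0] with τ hτ hτ0
  by_contra! hgτ
  obtain ⟨σ, hτσ, hσ⟩ :=
    exists_intervalIntegral_eq_of_lintegral_eq_top hα_nonneg hα_int hα_top hτ0 hδ.le
  exact (hτ σ hτσ).not_ge (sq_mul_le_intervalIntegral_mul_sq hL hτσ
    (fun s hs => hα_nonneg s (hIcc hτ0 hs)) (hα_int τ σ hτ0 hτσ) (hg_cont.mono (hIcc hτ0))
    (fun s hs => hg_lip τ s hτ0 hs.1) hε.le hgτ hσ hLδ)

section GradientFlow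

variable {E : Type*} [NormedAddCommGroup E] [InnerProductSpace ℝ E] [CompleteSpace E]

theorem HasGradientAt.comp_hasDerivAt {J : E → ℝ} {θ : ℝ → E} {g v : E} {t : ℝ}
    (hJ : HasGradientAt J g (θ t)) (hθ : HasDerivAt θ v t) :
    HasDerivAt (fun s => J (θ s)) (inner ℝ g v) t :=
  (hJ.hasFDerivAt.comp_hasDerivAt t hθ).congr_deriv InnerProductSpace.toDual_apply_apply

variable {J : E → ℝ} {G : E → E} {α : ℝ → ℝ} {θ : ℝ → E} {a b : ℝ}

theorem intervalIntegral_mul_norm_sq_eq_sub (hgrad : ∀ x, HasGradientAt J (G x) x)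
    (hG : Continuous G) (hab : a ≤ b) (hα_int : IntervalIntegrable α volume a b)
    (hθ : ∀ t ∈ Icc a b, HasDerivAt θ (-(α t • G (θ t))) t) :
    ∫ t in a..b, α t * ‖G (θ t)‖ ^ 2 = J (θ a) - J (θ b) := by
  have hθ_cont : ContinuousOn θ (Icc a b) := fun t ht => (hθ t ht).continuousAt.continuousWithinAt
  have hint : IntervalIntegrable (fun t => α t * ‖G (θ t)‖ ^ 2) volume a b :=
    hα_int.mul_continuousOn ((uIcc_of_le hab).symm ▸
      ((continuous_norm.comp hG).comp_continuousOn hθ_cont).pow 2)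
  have hderiv : ∀ t ∈ uIcc a b, HasDerivAt (fun s => J (θ s)) (-(α t * ‖G (θ t)‖ ^ 2)) t := by
    intro t ht
    rw [uIcc_of_le hab] at ht
    convert (hgrad (θ t)).comp_hasDerivAt (hθ t ht) using 1
    rw [inner_neg_right, real_inner_smul_right, real_inner_self_eq_norm_sq]
  rw [← neg_sub, ← intervalIntegral.integral_eq_sub_of_hasDerivAt hderiv hint.neg,
    intervalIntegral.integral_neg, neg_neg]

theorem norm_sub_le_mul_intervalIntegral {C : ℝ} (hbdd : ∀ x, ‖G x‖ ≤ C) (hG : Continuous G)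
    (hab : a ≤ b) (hα_nonneg : ∀ t ∈ Icc a b, 0 ≤ α t) (hα_int : IntervalIntegrable α volume a b)
    (hθ : ∀ t ∈ Icc a b, HasDerivAt θ (-(α t • G (θ t))) t) :
    ‖θ b - θ a‖ ≤ C * ∫ t in a..b, α t := by
  have hθ_cont : ContinuousOn θ (Icc a b) := fun t ht => (hθ t ht).continuousAt.continuousWithinAt
  have hint : IntervalIntegrable (fun t => -(α t • G (θ t))) volume a b :=
    (hα_int.smul_continuousOn ((uIcc_of_le hab).symm ▸ hG.comp_continuousOn hθ_cont)).neg
  rw [← intervalIntegral.integral_eq_sub_of_hasDerivAt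
    (fun t ht => hθ t ((uIcc_of_le hab) ▸ ht)) hint, ← intervalIntegral.integral_const_mul]
  refine intervalIntegral.norm_integral_le_of_norm_le hab (ae_of_all _ fun t ht => ?_)
    (hα_int.const_mul C)
  have hαt := hα_nonneg t (Ioc_subset_Icc_self ht)
  rw [norm_neg, norm_smul, Real.norm_of_nonneg hαt, mul_comm]
  exact mul_le_mul_of_nonneg_right (hbdd _) hαt

end GradientFlow

theorem gradient_descent_stationary_convergence_general
    (n : ℕ)
    (J : EuclideanSpace ℝ (Fin n) → ℝ)
    (hJ_nonneg : ∀ x, 0 ≤ J x)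
    (G : EuclideanSpace ℝ (Fin n) → EuclideanSpace ℝ (Fin n))
    (L_J C : ℝ)
    (hgrad : ∀ x, HasGradientAt J (G x) x)
    (hlip : LipschitzWith (Real.toNNReal L_J) G)
    (hbdd : ∀ x, ‖G x‖ ≤ C)
    (α : ℝ → ℝ)
    (hα_pos : ∀ τ : ℝ, 0 ≤ τ → 0 < α τ)
    (hα_anti : AntitoneOn α (Ici 0))
    (hα_int : ∫⁻ s in Ioi (0:ℝ), ENNReal.ofReal (α s) = ⊤)
    (θ : ℝ → EuclideanSpace ℝ (Fin n))
    (hθ : ∀ τ : ℝ, 0 ≤ τ → HasDerivAt θ (-(α τ • G (θ τ))) τ) :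
    Tendsto (fun τ => ‖G (θ τ)‖) atTop (nhds 0) := by
  have hα_nonneg : ∀ s, 0 ≤ s → 0 ≤ α s := fun s hs => (hα_pos s hs).le
  have hα_loc : ∀ a b, 0 ≤ a → a ≤ b → IntervalIntegrable α volume a b := fun a b ha hab =>
    (hα_anti.mono fun x hx => ha.trans (uIcc_of_le hab ▸ hx).1).intervalIntegrable
  have hθ_Icc : ∀ a b, 0 ≤ a → ∀ t ∈ Icc a b, HasDerivAt θ (-(α t • G (θ t))) t :=
    fun a b ha t ht => hθ t (ha.trans ht.1)
  have hC : 0 ≤ C := (norm_nonneg _).trans (hbdd 0)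
  refine tendsto_zero_of_intervalIntegral_mul_sq_le (K := J (θ 0)) (mul_nonneg L_J.toNNReal.coe_nonneg hC)
    hα_nonneg hα_loc hα_int (fun _ => norm_nonneg _)
    ((continuous_norm.comp hlip.continuous).comp_continuousOn
      fun t ht => (hθ t ht).continuousAt.continuousWithinAt) (fun a b ha hab => ?_)
    fun b hb => ?_
  · calc ‖G (θ a)‖ - ‖G (θ b)‖ ≤ ‖G (θ a) - G (θ b)‖ := norm_sub_norm_le _ _
      _ ≤ L_J.toNNReal * ‖θ b - θ a‖ := by rw [norm_sub_rev (θ b)]; exact hlip.norm_sub_le _ _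
      _ ≤ L_J.toNNReal * (C * ∫ s in a..b, α s) := by
          gcongr
          exact norm_sub_le_mul_intervalIntegral hbdd hlip.continuous hab
            (fun t ht => hα_nonneg t (ha.trans ht.1)) (hα_loc a b ha hab) (hθ_Icc a b ha)
      _ = _ := by ring
  · rw [intervalIntegral_mul_norm_sq_eq_sub hgrad hlip.continuous hb (hα_loc 0 b le_rfl hb)
      (hθ_Icc 0 b le_rfl)]
    linarith [hJ_nonneg (θ b)]

/-- convergence of continuous-time gradient descent to a stationary
point in finite dimensions: if `J : ℝⁿ → [0,∞)` has an `L_J`-Lipschitz gradient `G`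
bounded by `C`, the learning rate `α` is positive, non-increasing and of infinite total
mass, and `θ' = −α·G(θ)`, then `‖G(θ(τ))‖ → 0` as `τ → ∞`. -/
theorem gradient_descent_stationary_convergence
    (n : ℕ) (hn : 1 ≤ n)
    (J : EuclideanSpace ℝ (Fin n) → ℝ)
    (hJ_nonneg : ∀ x, 0 ≤ J x)
    (G : EuclideanSpace ℝ (Fin n) → EuclideanSpace ℝ (Fin n))
    (L_J C : ℝ)
    (hgrad : ∀ x, HasGradientAt J (G x) x)
    (hlip : LipschitzWith (Real.toNNReal L_J) G)
    (hbdd : ∀ x, ‖G x‖ ≤ C)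
    (α : ℝ → ℝ)
    (hα_pos : ∀ τ : ℝ, 0 ≤ τ → 0 < α τ)
    (hα_anti : AntitoneOn α (Ici 0))
    (hα_int : ∫⁻ s in Ioi (0:ℝ), ENNReal.ofReal (α s) = ⊤)
    (θ : ℝ → EuclideanSpace ℝ (Fin n))
    (hθ : ∀ τ : ℝ, 0 ≤ τ → HasDerivAt θ (-(α τ • G (θ τ))) τ) :
    Tendsto (fun τ => ‖G (θ τ)‖) atTop (nhds 0) :=
  gradient_descent_stationary_convergence_general n J hJ_nonneg G L_J C hgrad hlip hbdd α hα_pos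
    hα_anti hα_int θ hθ
end
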